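/- Along any extremal, contacts with the switching surface are of order at most 2: there is no time τ ∈ [0,t_f] at which Φ(τ) = Φ̇(τ) = Φ̈(τ) = 0, where Φ̇ = H₀₁∘(x,p) and Φ̈ = H₀₀₁∘(x,p); indeed such a τ would force p(τ) = 0, contradicting the nontriviality of the adjoint vector. -/

import Mathlib

open MeasureTheory

noncomputable section

/-- Lie bracket of vector fields on ℝ³: `[F,G](x) = G'(x)F(x) − F'(x)G(x)`. -/
def lieBracket (F G : (Fin 3 → ℝ) → (Fin 3 → ℝ)) (x : Fin 3 → ℝ) : Fin 3 → ℝ :=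
  fderiv ℝ G x (F x) - fderiv ℝ F x (G x)

/-- Drift vector field of the electric vehicle. -/
def F0 (c1 c2 c3 c4 c5 c6 : ℝ) (x : Fin 3 → ℝ) : Fin 3 → ℝ :=
  ![c1 * x 0 + c2 * x 2, c3 * x 2, c4 + c5 * x 0 + c6 * (x 2) ^ 2]

/-- Control vector field of the electric vehicle. -/
def F1 (c7 : ℝ) (_x : Fin 3 → ℝ) : Fin 3 → ℝ := ![c7, 0, 0]

/-- An extremal of the minimum time problem on `[0, t_f]`: a measurable control
`u` with values in `[-1,1]`, together with an absolutely continuous pair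
`(x, p)` (encoded by the integral form of the Hamiltonian ODE) with nonvanishing
adjoint vector, satisfying the maximization condition
`u(t) Φ(t) = |Φ(t)|` a.e., where `Φ(t) = c₇ p₁(t)` is the switching function. -/
structure IsExtremal (c1 c2 c3 c4 c5 c6 c7 tf : ℝ)
    (x p : ℝ → Fin 3 → ℝ) (u : ℝ → ℝ) : Prop where
  measurable_u : Measurable u
  u_mem : ∀ᵐ t ∂(volume.restrict (Set.Icc (0:ℝ) tf)), u t ∈ Set.Icc (-1:ℝ) 1
  p_ne : ∀ t ∈ Set.Icc (0:ℝ) tf, p t ≠ 0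
  cont_x : ContinuousOn x (Set.Icc (0:ℝ) tf)
  cont_p : ContinuousOn p (Set.Icc (0:ℝ) tf)
  ode_x1 : ∀ t ∈ Set.Icc (0:ℝ) tf,
    x t 0 = x 0 0 + ∫ s in (0:ℝ)..t, (c1 * x s 0 + c2 * x s 2 + u s * c7)
  ode_x2 : ∀ t ∈ Set.Icc (0:ℝ) tf,
    x t 1 = x 0 1 + ∫ s in (0:ℝ)..t, (c3 * x s 2)
  ode_x3 : ∀ t ∈ Set.Icc (0:ℝ) tf,
    x t 2 = x 0 2 + ∫ s in (0:ℝ)..t, (c4 + c5 * x s 0 + c6 * (x s 2) ^ 2)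
  ode_p1 : ∀ t ∈ Set.Icc (0:ℝ) tf,
    p t 0 = p 0 0 + ∫ s in (0:ℝ)..t, (-(c1 * p s 0 + c5 * p s 2))
  ode_p2 : ∀ t ∈ Set.Icc (0:ℝ) tf, p t 1 = p 0 1
  ode_p3 : ∀ t ∈ Set.Icc (0:ℝ) tf,
    p t 2 = p 0 2 + ∫ s in (0:ℝ)..t, (-(c2 * p s 0 + c3 * p s 1 + 2 * c6 * x s 2 * p s 2))
  maximization : ∀ᵐ t ∂(volume.restrict (Set.Icc (0:ℝ) tf)),
    u t * (c7 * p t 0) = |c7 * p t 0|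

/-!
Φ, H₀₁ and H₀₀₁ are linear in `p`. The bracket `F₀₁ = (-c₁c₇, 0, -c₅c₇)` is constant, and
`F₀₀₁` has second component `c₃c₅c₇ ≠ 0`; so `Φ = H₀₁ = H₀₀₁ = 0` forces successively
`p₁ = 0`, `p₃ = 0` and `p₂ = 0`, contradicting `p ≠ 0`.
-/

theorem lieBracket_const_right (F : (Fin 3 → ℝ) → (Fin 3 → ℝ)) (v x : Fin 3 → ℝ) :
    lieBracket F (fun _ => v) x = -fderiv ℝ F x v := by
  simp [lieBracket]

theorem fderiv_F0_apply (c1 c2 c3 c4 c5 c6 : ℝ) (x v : Fin 3 → ℝ) :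
    fderiv ℝ (F0 c1 c2 c3 c4 c5 c6) x v =
      ![c1 * v 0 + c2 * v 2, c3 * v 2, c5 * v 0 + 2 * c6 * x 2 * v 2] := by
  have hd : DifferentiableAt ℝ (F0 c1 c2 c3 c4 c5 c6) x := by
    rw [differentiableAt_pi]
    intro i
    fin_cases i <;>
      simp only [F0, Fin.zero_eta, Fin.mk_one, Fin.reduceFinMk, Matrix.cons_val] <;> fun_prop
  have h0 := hasFDerivAt_apply (𝕜 := ℝ) 0 x
  have h2 := hasFDerivAt_apply (𝕜 := ℝ) 2 x
  funext i
  rw [← ContinuousLinearMap.proj_apply (R := ℝ) i (fderiv ℝ _ x v),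
    ← ContinuousLinearMap.comp_apply, ← fderiv_apply hd]
  fin_cases i <;> simp only [F0, Fin.zero_eta, Fin.mk_one, Fin.reduceFinMk, Matrix.cons_val]
  · rw [((h0.const_mul c1).fun_add (h2.const_mul c2)).fderiv]
    simp
  · rw [(h2.const_mul c3).fderiv]
    simp
  · rw [(((h0.const_mul c5).const_add c4).fun_add ((h2.pow 2).const_mul c6)).fderiv]
    simp only [add_apply, smul_apply, ContinuousLinearMap.proj_apply, smul_eq_mul]
    ring

theorem lieBracket_F0_F1 (c1 c2 c3 c4 c5 c6 c7 : ℝ) (x : Fin 3 → ℝ) :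
    lieBracket (F0 c1 c2 c3 c4 c5 c6) (F1 c7) x = ![-(c1 * c7), 0, -(c5 * c7)] := by
  rw [show F1 c7 = fun _ => ![c7, 0, 0] from rfl, lieBracket_const_right, fderiv_F0_apply]
  simp

theorem lieBracket_F0_lieBracket_F0_F1 (c1 c2 c3 c4 c5 c6 c7 : ℝ) (x : Fin 3 → ℝ) :
    lieBracket (F0 c1 c2 c3 c4 c5 c6) (lieBracket (F0 c1 c2 c3 c4 c5 c6) (F1 c7)) x =
      ![c7 * (c1 ^ 2 + c2 * c5), c7 * (c3 * c5), c7 * c5 * (c1 + 2 * c6 * x 2)] := by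
  rw [funext (lieBracket_F0_F1 c1 c2 c3 c4 c5 c6 c7), lieBracket_const_right, fderiv_F0_apply]
  ext i
  fin_cases i <;>
    simp only [Pi.neg_apply, Matrix.cons_val, Fin.zero_eta, Fin.mk_one, Fin.reduceFinMk] <;> ring

theorem stmt10_general (c1 c2 c3 c4 c5 c6 c7 tf : ℝ)
    (h3 : 0 < c3) (h5 : 0 < c5) (h7 : 0 < c7)
    (x p : ℝ → Fin 3 → ℝ) (u : ℝ → ℝ)
    (hext : IsExtremal c1 c2 c3 c4 c5 c6 c7 tf x p u) :
    ∀ τ ∈ Set.Icc (0:ℝ) tf,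
      ¬ (c7 * p τ 0 = 0 ∧
         (∑ i, p τ i * lieBracket (F0 c1 c2 c3 c4 c5 c6) (F1 c7) (x τ) i) = 0 ∧
         (∑ i, p τ i *
            lieBracket (F0 c1 c2 c3 c4 c5 c6)
              (lieBracket (F0 c1 c2 c3 c4 c5 c6) (F1 c7)) (x τ) i) = 0) := by
  rintro τ hτ ⟨hΦ, hH01, hH001⟩
  simp only [Fin.sum_univ_three, lieBracket_F0_F1, lieBracket_F0_lieBracket_F0_F1] at hH01 hH001
  have hp0 : p τ 0 = 0 := (mul_eq_zero.1 hΦ).resolve_left h7.ne'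
  have hp2 : p τ 2 = 0 := by simpa [hp0, h5.ne', h7.ne'] using hH01
  have hp1 : p τ 1 = 0 := by simpa [hp0, hp2, h3.ne', h5.ne', h7.ne'] using hH001
  refine hext.p_ne τ hτ (funext fun i => ?_)
  fin_cases i <;> assumption

/-- Along any extremal, contacts with the switching surface are of order at
most 2: there is no time `τ` at which `Φ(τ) = Φ̇(τ) = Φ̈(τ) = 0`, where
`Φ̇ = H₀₁ = ⟨p, F₀₁(x)⟩` and `Φ̈ = H₀₀₁ = ⟨p, F₀₀₁(x)⟩`. -/
theorem stmt10 (c1 c2 c3 c4 c5 c6 c7 tf : ℝ)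
    (h1 : c1 < 0) (h2 : c2 < 0) (h3 : 0 < c3) (h4 : c4 < 0)
    (h5 : 0 < c5) (h6 : c6 < 0) (h7 : 0 < c7)
    (x p : ℝ → Fin 3 → ℝ) (u : ℝ → ℝ)
    (hext : IsExtremal c1 c2 c3 c4 c5 c6 c7 tf x p u) :
    ∀ τ ∈ Set.Icc (0:ℝ) tf,
      ¬ (c7 * p τ 0 = 0 ∧
         (∑ i, p τ i * lieBracket (F0 c1 c2 c3 c4 c5 c6) (F1 c7) (x τ) i) = 0 ∧
         (∑ i, p τ i *
            lieBracket (F0 c1 c2 c3 c4 c5 c6)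
              (lieBracket (F0 c1 c2 c3 c4 c5 c6) (F1 c7)) (x τ) i) = 0) :=
  stmt10_general c1 c2 c3 c4 c5 c6 c7 tf h3 h5 h7 x p u hext
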